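/- Let ts : {1,...,n} → ℝ be slowly monotone with respect to M and tsm(v) = ⌊ts(v)⌋ mod M. If the pair (u,v) with u ≤ v is not tsm-big, then dtsm+(u,v) = dtsm(u,v). -/
import Mathlib


open Finset

/-- A weighted constraint edge: `ts tgt - ts src ◁ wt` where ◁ is `<` if `strict` else `≤`. -/
structure WEdge where
  src : ℕ
  strict : Bool
  wt : ℤ
  tgt : ℕ
deriving DecidableEq

/-- `ts` satisfies the constraint of edge `e`. -/
def satEdge (ts : ℕ → ℝ) (e : WEdge) : Prop :=
  if e.strict then ts e.tgt - ts e.src < (e.wt : ℝ) else ts e.tgt - ts e.src ≤ (e.wt : ℝ)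

/-- `ts` realizes the linear weighted graph on vertices `{1,…,n}` with edge set `E`:
monotone w.r.t. the linear order and all difference constraints hold. -/
def Realizes (n : ℕ) (E : Finset WEdge) (ts : ℕ → ℝ) : Prop :=
  (∀ u v : ℕ, 1 ≤ u → u ≤ v → v ≤ n → ts u ≤ ts v) ∧ ∀ e ∈ E, satEdge ts e

/-- Integer parts of consecutive time-stamps differ by at least 0 and at most `M - 1`. -/
def SlowlyMonotone (M : ℤ) (n : ℕ) (ts : ℕ → ℝ) : Prop :=
  ∀ i : ℕ, 1 ≤ i → i < n → 0 ≤ ⌊ts (i + 1)⌋ - ⌊ts i⌋ ∧ ⌊ts (i + 1)⌋ - ⌊ts i⌋ ≤ M - 1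

/-- All edges of the graph have endpoints in `{1,…,n}`. -/
def InGraph (n : ℕ) (E : Finset WEdge) : Prop :=
  ∀ e ∈ E, 1 ≤ e.src ∧ e.src ≤ n ∧ 1 ≤ e.tgt ∧ e.tgt ≤ n

/-- `M` weight-bounded: all weights have absolute value at most `M - 1`. -/
def WtBounded (M : ℤ) (E : Finset WEdge) : Prop := ∀ e ∈ E, |e.wt| ≤ M - 1

/-- `dtsm(u,v) = (tsm v - tsm u) mod M`. -/
def dtsm (M : ℤ) (tsm : ℕ → ℤ) (u v : ℕ) : ℤ := (tsm v - tsm u) % M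

/-- `dtsm⁺(u,v)`, for `u ≤ v`: the cumulative sum of consecutive `dtsm`'s, capped at `M`. -/
def dtsmP (M : ℤ) (tsm : ℕ → ℤ) (u v : ℕ) : ℤ :=
  min M (∑ i ∈ Finset.Ico u v, dtsm M tsm i (i + 1))

/-- Antisymmetric extension of `dtsm⁺` to arbitrary pairs. -/
def dtsmE (M : ℤ) (tsm : ℕ → ℤ) (u v : ℕ) : ℤ :=
  if u ≤ v then dtsmP M tsm u v else - dtsmP M tsm v u

/-- `(u,v)` is `tsm`-big. -/
def TsmBig (M : ℤ) (tsm : ℕ → ℤ) (u v : ℕ) : Prop :=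
  ∃ w1 w2 : ℕ, u ≤ w1 ∧ w1 < w2 ∧ w2 ≤ v ∧ M ≤ dtsm M tsm u w1 + dtsm M tsm w1 w2

/-- `tsm` is a time-stamping modulo `M` on vertices `{1,…,n}`. -/
def TSM (M : ℤ) (n : ℕ) (tsm : ℕ → ℤ) : Prop :=
  ∀ v, 1 ≤ v → v ≤ n → 0 ≤ tsm v ∧ tsm v < M

/-- `tsm` weakly satisfies the graph (forward/backward conditions). -/
def WeaklySat (M : ℤ) (E : Finset WEdge) (tsm : ℕ → ℤ) : Prop :=
  ∀ e ∈ E,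
    (e.src ≤ e.tgt → ¬ TsmBig M tsm e.src e.tgt ∧ dtsm M tsm e.src e.tgt ≤ e.wt) ∧
    (e.tgt < e.src → TsmBig M tsm e.tgt e.src ∨ - e.wt ≤ dtsm M tsm e.tgt e.src)

/-- `(u,v) ∈ geqFr`: fractional part of `ts u` must be ≥ that of `ts v`. -/
def geqFr (M : ℤ) (tsm : ℕ → ℤ) (E : Finset WEdge) (u v : ℕ) : Prop :=
  (∃ e ∈ E, e.src = u ∧ e.tgt = v ∧ dtsmE M tsm u v = e.wt) ∨
  (v + 1 = u ∧ dtsmE M tsm u v = 0)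

/-- `(u,v) ∈ gtFr`: fractional part of `ts u` must be > that of `ts v`. -/
def gtFr (M : ℤ) (tsm : ℕ → ℤ) (E : Finset WEdge) (u v : ℕ) : Prop :=
  ∃ e ∈ E, e.strict = true ∧ e.src = u ∧ e.tgt = v ∧ dtsmE M tsm u v = e.wt

open Classical in
/-- Number of `gtFr` edges used by the path `p 0, p 1, …, p k`. -/
noncomputable def gtCount (M : ℤ) (tsm : ℕ → ℤ) (E : Finset WEdge) (k : ℕ) (p : ℕ → ℕ) : ℕ :=
  ((Finset.range k).filter (fun i => gtFr M tsm E (p i) (p (i + 1)))).card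

theorem dtsmP_eq_dtsm_of_not_tsmBig (M : ℤ) (hM : 1 ≤ M) (n : ℕ) (ts : ℕ → ℝ)
    (hsm : SlowlyMonotone M n ts) (tsm : ℕ → ℤ) (htsm : ∀ v, tsm v = ⌊ts v⌋ % M)
    (u v : ℕ) (hu : 1 ≤ u) (huv : u ≤ v) (hv : v ≤ n)
    (hbig : ¬ TsmBig M tsm u v) :
    dtsmP M tsm u v = dtsm M tsm u v := by
  classical
  set g : ℕ → ℤ := fun w => ⌊ts w⌋ with hg
  have hstep : ∀ i : ℕ, 1 ≤ i → i < n → dtsm M tsm i (i + 1) = g (i + 1) - g i := by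
    intro i h1 h2
    have hb := hsm i h1 h2
    have h0 : (0:ℤ) < M := by omega
    show (tsm (i + 1) - tsm i) % M = g (i + 1) - g i
    rw [htsm, htsm, ← Int.sub_emod]
    exact Int.emod_eq_of_lt hb.1 (by omega)
  have hsum : ∀ w : ℕ, u ≤ w → w ≤ v →
      ∑ i ∈ Finset.Ico u w, dtsm M tsm i (i + 1) = g w - g u := by
    intro w hw
    induction w, hw using Nat.le_induction with
    | base => intro _; simp
    | succ w hw ih =>
      intro hwv
      rw [Finset.sum_Ico_succ_top hw, ih (by omega), hstep w (by omega) (by omega)]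
      ring
  have hmono : ∀ w : ℕ, u ≤ w → w ≤ v → 0 ≤ g w - g u := by
    intro w hw hwv
    rw [← hsum w hw hwv]
    exact Finset.sum_nonneg fun i _ => Int.emod_nonneg _ (by omega)
  have hSlt : g v - g u < M := by
    by_contra h
    push_neg at h
    apply hbig
    have hP : ∃ w : ℕ, u ≤ w ∧ w ≤ v ∧ M ≤ g w - g u := ⟨v, huv, le_rfl, h⟩
    set w2 := Nat.find hP with hw2def
    obtain ⟨hw2u, hw2v, hw2M⟩ := Nat.find_spec hP
    rw [← hw2def] at hw2u hw2v hw2M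
    have hne : u < w2 := by
      rcases lt_or_eq_of_le hw2u with h' | h'
      · exact h'
      · exfalso; rw [← h'] at hw2M; simp at hw2M; omega
    have hnot := Nat.find_min hP (show w2 - 1 < w2 by omega)
    have hlt : g (w2 - 1) - g u < M := by
      by_contra h''
      exact hnot ⟨by omega, by omega, by omega⟩
    refine ⟨w2 - 1, w2, by omega, by omega, hw2v, ?_⟩
    have h1 : dtsm M tsm u (w2 - 1) = g (w2 - 1) - g u := by
      show (tsm (w2 - 1) - tsm u) % M = _
      rw [htsm, htsm, ← Int.sub_emod]
      exact Int.emod_eq_of_lt (hmono _ (by omega) (by omega)) hlt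
    have h2 : dtsm M tsm (w2 - 1) w2 = g w2 - g (w2 - 1) := by
      have := hstep (w2 - 1) (by omega) (by omega)
      rwa [show w2 - 1 + 1 = w2 by omega] at this
    rw [h1, h2]; omega
  have hS0 : 0 ≤ g v - g u := hmono v huv le_rfl
  have hdv : dtsm M tsm u v = g v - g u := by
    show (tsm v - tsm u) % M = _
    rw [htsm, htsm, ← Int.sub_emod]
    exact Int.emod_eq_of_lt hS0 hSlt
  rw [dtsmP, hsum v huv le_rfl, hdv]
  exact min_eq_right (le_of_lt hSlt)
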